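/- arXiv:1810.07221 — 5 statements merged into one kernel-verified Lean document; each statement's English description precedes it below -/
import Mathlib

section
/- Let R be a (left) nearfield which is not distributive, i.e. there exist α, β, λ ∈ R with (α+β)·λ ≠ α·λ + β·λ, and let n be a positive integer. For any vectors v_1, …, v_k ∈ R^n there exist a natural number k′ and nonzero vectors u_1, …, u_{k′} ∈ R^n such that for every coordinate j ∈ {1, …, n} at most one of the u_i has a nonzero j-th entry, and gen(v_1, …, v_k) = { u_1·r_1 + u_2·r_2 + ⋯ + u_{k′}·r_{k′} : r_1, …, r_{k′} ∈ R }, this sum being direct: every element of gen(v_1, …, v_k) has a unique representation of this form. -/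
/-- A (left) nearfield: `(R,+)` is an abelian group, multiplication is associative
with identity `1 ≠ 0`, every nonzero element has a two-sided inverse,
`0` multiplies to `0` on both sides, and the left distributive law holds. -/
class Nearfield (R : Type*) extends AddCommGroup R, One R, Mul R where
  mul_assoc : ∀ a b c : R, a * b * c = a * (b * c)
  one_mul : ∀ a : R, 1 * a = a
  mul_one : ∀ a : R, a * 1 = a
  one_ne_zero : (1 : R) ≠ 0
  zero_mul : ∀ a : R, 0 * a = 0
  mul_zero : ∀ a : R, a * 0 = 0
  left_distrib : ∀ a b c : R, a * (b + c) = a * b + a * c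
  exists_inv : ∀ a : R, a ≠ 0 → ∃ b : R, a * b = 1 ∧ b * a = 1

variable {R : Type*} [Nearfield R] {n : ℕ}

/-- Right scalar multiplication on `R^n`: `(x · r) j = x j * r`. -/
def vsmul (x : Fin n → R) (r : R) : Fin n → R := fun j => x j * r

/-- An `R`-subgroup of `R^n`: an additive subgroup closed under right scalar
multiplication. -/
def IsRSubgroup (S : Set (Fin n → R)) : Prop :=
  (0 : Fin n → R) ∈ S ∧ (∀ x ∈ S, ∀ y ∈ S, x + y ∈ S) ∧ (∀ x ∈ S, -x ∈ S) ∧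
    ∀ x ∈ S, ∀ r : R, vsmul x r ∈ S

/-- `nvGen V` is the smallest `R`-subgroup of `R^n` containing `V`
(the intersection of all `R`-subgroups containing `V`). -/
def nvGen (V : Set (Fin n → R)) : Set (Fin n → R) :=
  { x | ∀ S : Set (Fin n → R), IsRSubgroup S → V ⊆ S → x ∈ S }

/-- A subspace of `R^n`: an additive subgroup `N` with `(x+y)·r − x·r ∈ N`
for all `x ∈ R^n`, `y ∈ N`, `r ∈ R`. -/
def IsSubspace (N : Set (Fin n → R)) : Prop :=
  (0 : Fin n → R) ∈ N ∧ (∀ x ∈ N, ∀ y ∈ N, x + y ∈ N) ∧ (∀ x ∈ N, -x ∈ N) ∧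
    ∀ x : Fin n → R, ∀ y ∈ N, ∀ r : R, vsmul (x + y) r - vsmul x r ∈ N

/-- `nvSpan V` is the smallest subspace of `R^n` containing `V`. -/
def nvSpan (V : Set (Fin n → R)) : Set (Fin n → R) :=
  { x | ∀ N : Set (Fin n → R), IsSubspace N → V ⊆ N → x ∈ N }

/-- `nvLC V 0 = V` and `nvLC V (m+1)` is the set of all finite right `R`-linear
combinations of elements of `nvLC V m`. -/
def nvLC (V : Set (Fin n → R)) : ℕ → Set (Fin n → R)
  | 0 => V
  | m + 1 => { x | ∃ F : Finset (Fin n → R), ↑F ⊆ nvLC V m ∧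
      ∃ lam : (Fin n → R) → R, x = ∑ w ∈ F, vsmul w (lam w) }

/- ---------------- auxiliary lemmas ---------------- -/

lemma nf_cancel {a b c : R} (ha : a ≠ 0) (h : a * b = a * c) : b = c := by
  obtain ⟨d, _, hd2⟩ := Nearfield.exists_inv a ha
  calc b = 1 * b := (Nearfield.one_mul b).symm
    _ = d * a * b := by rw [hd2]
    _ = d * (a * b) := Nearfield.mul_assoc ..
    _ = d * (a * c) := by rw [h]
    _ = d * a * c := (Nearfield.mul_assoc ..).symm
    _ = 1 * c := by rw [hd2]
    _ = c := Nearfield.one_mul c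

lemma nf_mul_eq_zero {a b : R} (ha : a ≠ 0) (h : a * b = 0) : b = 0 :=
  nf_cancel ha (by rw [h, Nearfield.mul_zero])

/-- If a pair of nonzero elements "distributes in all right combinations", the
nearfield is fully distributive. -/
lemma nf_key {a b : R} (ha : a ≠ 0) (hb : b ≠ 0)
    (h : ∀ r s l : R, (a * r + b * s) * l = a * r * l + b * s * l)
    (x y l : R) : (x + y) * l = x * l + y * l := by
  obtain ⟨a', ha1, _⟩ := Nearfield.exists_inv a ha
  obtain ⟨b', hb1, _⟩ := Nearfield.exists_inv b hb
  have := h (a' * x) (b' * y) l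
  rwa [← Nearfield.mul_assoc a a' x, ha1, Nearfield.one_mul,
      ← Nearfield.mul_assoc b b' y, hb1, Nearfield.one_mul] at this

lemma vsmul_zero (x : Fin n → R) : vsmul x 0 = 0 :=
  funext fun _ => Nearfield.mul_zero _

lemma vsmul_one (x : Fin n → R) : vsmul x 1 = x :=
  funext fun _ => Nearfield.mul_one _

lemma sum_mem_of {S : Set (Fin n → R)} (hS : IsRSubgroup S)
    {ι : Type*} (s : Finset ι) (f : ι → Fin n → R) (hf : ∀ i ∈ s, f i ∈ S) :
    (∑ i ∈ s, f i) ∈ S :=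
  Finset.sum_induction f (· ∈ S) (fun a b ha hb => hS.2.1 a ha b hb) hS.1 hf

/-- Structure theorem for `R`-subgroups of `R^n` supported in a finset `A`. -/
lemma structure_lemma (hd : ∃ α β lam : R, (α + β) * lam ≠ α * lam + β * lam) :
    ∀ (m : ℕ) (A : Finset (Fin n)) (S : Set (Fin n → R)),
      A.card ≤ m → IsRSubgroup S → (∀ x ∈ S, ∀ j : Fin n, j ∉ A → x j = 0) →
      ∃ (k' : ℕ) (u : Fin k' → (Fin n → R)),
        (∀ i, u i ≠ 0) ∧
        (∀ j : Fin n, ∀ i i' : Fin k', u i j ≠ 0 → u i' j ≠ 0 → i = i') ∧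
        (∀ x, x ∈ S ↔ ∃ r : Fin k' → R, x = ∑ i, vsmul (u i) (r i)) := by
  intro m
  induction m with
  | zero =>
    intro A S hcard hS hvan
    have hA : A = ∅ := Finset.card_eq_zero.mp (Nat.le_zero.mp hcard)
    refine ⟨0, Fin.elim0, fun i => i.elim0, fun j i => i.elim0, fun x => ?_⟩
    constructor
    · intro hx
      refine ⟨Fin.elim0, ?_⟩
      have : x = 0 := funext fun j => hvan x hx j (by simp [hA])
      simp [this]
    · rintro ⟨r, rfl⟩
      simpa using hS.1
  | succ m ih =>
    intro A S hcard hS hvan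
    by_cases htriv : ∀ x ∈ S, x = (0 : Fin n → R)
    · refine ⟨0, Fin.elim0, fun i => i.elim0, fun j i => i.elim0, fun x => ?_⟩
      constructor
      · intro hx
        refine ⟨Fin.elim0, ?_⟩
        simp [htriv x hx]
      · rintro ⟨r, rfl⟩
        simpa using hS.1
    · push_neg at htriv
      obtain ⟨x0, hx0S, hx0⟩ := htriv
      obtain ⟨j0, hj0⟩ : ∃ j, x0 j ≠ 0 := by
        by_contra h
        push_neg at h
        exact hx0 (funext h)
      have hj0A : j0 ∈ A := by
        by_contra h
        exact hj0 (hvan x0 hx0S j0 h)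
      set T : Set (Fin n → R) := {x | x ∈ S ∧ x j0 = 0} with hTdef
      have hTsub : IsRSubgroup T := by
        refine ⟨⟨hS.1, rfl⟩, ?_, ?_, ?_⟩
        · intro x hx y hy
          exact ⟨hS.2.1 x hx.1 y hy.1,
            by show x j0 + y j0 = 0; rw [hx.2, hy.2, add_zero]⟩
        · intro x hx
          exact ⟨hS.2.2.1 x hx.1, by show -(x j0) = 0; rw [hx.2, neg_zero]⟩
        · intro x hx r
          exact ⟨hS.2.2.2 x hx.1 r,
            by show x j0 * r = 0; rw [hx.2, Nearfield.zero_mul]⟩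
      have hTvan : ∀ x ∈ T, ∀ j : Fin n, j ∉ A.erase j0 → x j = 0 := by
        intro x hx j hj
        by_cases hjj0 : j = j0
        · rw [hjj0]; exact hx.2
        · exact hvan x hx.1 j (fun hjA => hj (Finset.mem_erase.mpr ⟨hjj0, hjA⟩))
      have hTcard : (A.erase j0).card ≤ m := by
        rw [Finset.card_erase_of_mem hj0A]
        omega
      obtain ⟨k'', w, hw0, hwdisj, hwmem⟩ := ih (A.erase j0) T hTcard hTsub hTvan
      -- each w i belongs to T
      have hwT : ∀ i, w i ∈ T := by
        intro i
        rw [hwmem]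
        refine ⟨fun i' => if i' = i then 1 else 0, ?_⟩
        rw [Finset.sum_eq_single_of_mem i (Finset.mem_univ i)
          (fun b _ hb => by simp [hb, vsmul_zero])]
        simp [vsmul_one]
      have hwS : ∀ i, w i ∈ S := fun i => (hwT i).1
      have hwj0 : ∀ i, w i j0 = 0 := fun i => (hwT i).2
      -- normalize x0
      obtain ⟨c, hc1, _⟩ := Nearfield.exists_inv (x0 j0) hj0
      set u : Fin n → R := vsmul x0 c with hudef
      have huS : u ∈ S := hS.2.2.2 x0 hx0S c
      have huj0 : u j0 = 1 := hc1
      -- pivots for the w i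
      have hpex : ∀ i, ∃ j, w i j ≠ 0 := by
        intro i
        by_contra h
        push_neg at h
        exact hw0 i (funext h)
      choose p hp using hpex
      choose d hdi1 hdi2 using fun i => Nearfield.exists_inv (w i (p i)) (hp i)
      -- reduce u against the w i
      set u' : Fin n → R := u - ∑ i, vsmul (w i) (d i * u (p i)) with hu'def
      have hu'ap : ∀ j, u' j = u j - ∑ i, w i j * (d i * u (p i)) := by
        intro j
        rw [hu'def, Pi.sub_apply, Finset.sum_apply]
        rfl
      have hu'S : u' ∈ S := by
        rw [hu'def, sub_eq_add_neg]
        exact hS.2.1 u huS _ (hS.2.2.1 _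
          (sum_mem_of hS _ _ (fun i _ => hS.2.2.2 _ (hwS i) _)))
      have hu'j0 : u' j0 = 1 := by
        rw [hu'ap, huj0,
          Finset.sum_eq_zero (fun i _ => by rw [hwj0 i, Nearfield.zero_mul]),
          sub_zero]
      have hu'ne : u' ≠ 0 := by
        intro h
        have := congrFun h j0
        rw [hu'j0] at this
        exact Nearfield.one_ne_zero this
      have hu'p : ∀ i, u' (p i) = 0 := by
        intro i
        have hside : ∀ b ∈ Finset.univ, b ≠ i → w b (p i) * (d b * u (p b)) = 0 := by
          intro b _ hb
          have hwb : w b (p i) = 0 := by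
            by_contra hbz
            exact hb (hwdisj (p i) b i hbz (hp i))
          rw [hwb, Nearfield.zero_mul]
        rw [hu'ap, Finset.sum_eq_single_of_mem i (Finset.mem_univ i) hside,
          ← Nearfield.mul_assoc, hdi1 i, Nearfield.one_mul, sub_self]
      -- key disjointness, using non-distributivity
      have hdisj' : ∀ (j : Fin n) (i : Fin k''), u' j ≠ 0 → w i j = 0 := by
        intro j i hu'j
        by_contra hwij
        obtain ⟨α, β, lam, hnd⟩ := hd
        apply hnd
        refine nf_key hu'j hwij ?_ α β lam
        intro r s l
        set z : Fin n → R :=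
          vsmul (vsmul u' r + vsmul (w i) s) l - vsmul (vsmul u' r) l -
            vsmul (vsmul (w i) s) l with hzdef
        have hzap : ∀ j', z j' =
            (u' j' * r + w i j' * s) * l - u' j' * r * l - w i j' * s * l := by
          intro j'
          rw [hzdef]
          rfl
        have hzS : z ∈ S := by
          have h1 : vsmul u' r ∈ S := hS.2.2.2 _ hu'S r
          have h2 : vsmul (w i) s ∈ S := hS.2.2.2 _ (hwS i) s
          rw [hzdef, sub_sub, sub_eq_add_neg]
          exact hS.2.1 _ (hS.2.2.2 _ (hS.2.1 _ h1 _ h2) l) _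
            (hS.2.2.1 _ (hS.2.1 _ (hS.2.2.2 _ h1 l) _ (hS.2.2.2 _ h2 l)))
        have hzj0 : z j0 = 0 := by
          rw [hzap, hu'j0, hwj0 i, Nearfield.one_mul, Nearfield.zero_mul,
            add_zero, Nearfield.zero_mul, sub_zero, sub_self]
        obtain ⟨s', hs'⟩ := (hwmem z).1 ⟨hzS, hzj0⟩
        have hzp : ∀ m', z (p m') = 0 := by
          intro m'
          rw [hzap, hu'p m', Nearfield.zero_mul, zero_add, Nearfield.zero_mul,
            sub_zero, sub_self]
        have hs'0 : ∀ m', s' m' = 0 := by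
          intro m'
          have h1 : z (p m') = ∑ i', w i' (p m') * s' i' := by
            rw [hs', Finset.sum_apply]
            rfl
          have hside : ∀ b ∈ Finset.univ, b ≠ m' → w b (p m') * s' b = 0 := by
            intro b _ hb
            have hwb : w b (p m') = 0 := by
              by_contra hbz
              exact hb (hwdisj (p m') b m' hbz (hp m'))
            rw [hwb, Nearfield.zero_mul]
          rw [Finset.sum_eq_single_of_mem m' (Finset.mem_univ m') hside] at h1
          rw [hzp m'] at h1
          exact nf_mul_eq_zero (hp m') h1.symm
        have hz0 : z = 0 := by
          rw [hs', Finset.sum_eq_zero (fun i' _ => by rw [hs'0, vsmul_zero])]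
        have hzj : (u' j * r + w i j * s) * l - u' j * r * l - w i j * s * l = 0 := by
          rw [← hzap j, hz0]
          rfl
        rw [sub_sub] at hzj
        exact sub_eq_zero.mp hzj
      -- assemble
      refine ⟨k'' + 1, Fin.cons u' w, ?_, ?_, ?_⟩
      · intro i
        induction i using Fin.cases with
        | zero => simpa using hu'ne
        | succ i => simpa using hw0 i
      · intro j i i'
        induction i using Fin.cases with
        | zero =>
          induction i' using Fin.cases with
          | zero => intro _ _; rfl
          | succ i' =>
            intro h1 h2
            rw [Fin.cons_zero] at h1
            rw [Fin.cons_succ] at h2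
            exact (h2 (hdisj' j i' h1)).elim
        | succ i =>
          induction i' using Fin.cases with
          | zero =>
            intro h1 h2
            rw [Fin.cons_succ] at h1
            rw [Fin.cons_zero] at h2
            exact (h1 (hdisj' j i h2)).elim
          | succ i' =>
            intro h1 h2
            rw [Fin.cons_succ] at h1
            rw [Fin.cons_succ] at h2
            exact congrArg Fin.succ (hwdisj j i i' h1 h2)
      · intro x
        constructor
        · intro hx
          set t : Fin n → R := x - vsmul u' (x j0) with htdef
          have htS : t ∈ S := by
            rw [htdef, sub_eq_add_neg]
            exact hS.2.1 x hx _ (hS.2.2.1 _ (hS.2.2.2 _ hu'S _))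
          have htj0 : t j0 = 0 := by
            have : t j0 = x j0 - u' j0 * x j0 := rfl
            rw [this, hu'j0, Nearfield.one_mul, sub_self]
          obtain ⟨s, hs⟩ := (hwmem t).1 ⟨htS, htj0⟩
          refine ⟨Fin.cons (x j0) s, ?_⟩
          rw [Fin.sum_univ_succ]
          simp only [Fin.cons_zero, Fin.cons_succ]
          rw [← hs, htdef]
          abel
        · rintro ⟨r, rfl⟩
          refine sum_mem_of hS Finset.univ _ (fun i _ => ?_)
          induction i using Fin.cases with
          | zero => simpa using hS.2.2.2 _ hu'S (r 0)
          | succ i => simpa using hS.2.2.2 _ (hwS i) (r i.succ)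

/-- classification of `gen(v₁,…,v_k)` in a non-distributive
nearfield: there are finitely many nonzero vectors `u₁,…,u_{k'}`, no two having a
nonzero entry in the same coordinate, such that `gen(v₁,…,v_k) = ⊕ uᵢR`, the
sum being direct (unique representation). -/
theorem gen_classification (hd : ∃ α β lam : R, (α + β) * lam ≠ α * lam + β * lam)
    (hn : 0 < n) {k : ℕ} (v : Fin k → (Fin n → R)) :
    ∃ (k' : ℕ) (u : Fin k' → (Fin n → R)),
      (∀ i, u i ≠ 0) ∧
      (∀ j : Fin n, ∀ i i' : Fin k', u i j ≠ 0 → u i' j ≠ 0 → i = i') ∧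
      (∀ x : Fin n → R, x ∈ nvGen (Set.range v) ↔
        ∃ r : Fin k' → R, x = ∑ i, vsmul (u i) (r i)) ∧
      (∀ r r' : Fin k' → R, ∑ i, vsmul (u i) (r i) = ∑ i, vsmul (u i) (r' i) →
        r = r') := by
  have hgen : IsRSubgroup (nvGen (Set.range v)) := by
    refine ⟨fun N hN _ => hN.1, ?_, ?_, ?_⟩
    · intro x hx y hy N hN hV
      exact hN.2.1 x (hx N hN hV) y (hy N hN hV)
    · intro x hx N hN hV
      exact hN.2.2.1 x (hx N hN hV)
    · intro x hx r N hN hV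
      exact hN.2.2.2 x (hx N hN hV) r
  obtain ⟨k', u, hu0, hudisj, humem⟩ :=
    structure_lemma hd n Finset.univ (nvGen (Set.range v))
      (le_of_eq (by simp)) hgen (fun x _ j hj => absurd (Finset.mem_univ j) hj)
  refine ⟨k', u, hu0, hudisj, humem, ?_⟩
  intro r r' h
  funext m
  obtain ⟨j, hj⟩ : ∃ j, u m j ≠ 0 := by
    by_contra hcon
    push_neg at hcon
    exact hu0 m (funext hcon)
  have hc := congrFun h j
  rw [Finset.sum_apply, Finset.sum_apply] at hc
  have hside : ∀ (q : Fin k' → R), ∀ b ∈ Finset.univ, b ≠ m →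
      vsmul (u b) (q b) j = 0 := by
    intro q b _ hb
    have hub : u b j = 0 := by
      by_contra hbz
      exact hb (hudisj j b m hbz hj)
    show u b j * q b = 0
    rw [hub, Nearfield.zero_mul]
  rw [Finset.sum_eq_single_of_mem m (Finset.mem_univ m) (hside r),
    Finset.sum_eq_single_of_mem m (Finset.mem_univ m) (hside r')] at hc
  exact nf_cancel hj hc
end

section
/- Let R be a (left) nearfield and n ≥ 2 an integer, and suppose there exist elements α_1, …, α_{n−1}, λ ∈ R with (α_1 + α_2 + ⋯ + α_{n−1})·λ ≠ α_1·λ + α_2·λ + ⋯ + α_{n−1}·λ. Then there exist n−1 vectors v_1, …, v_{n−1} ∈ R^n such that gen(v_1, …, v_{n−1}) = R^n. -/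
variable {R : Type*} [Nearfield R] {n : ℕ}

lemma vsmul_single (j : Fin n) (a r : R) :
    vsmul (Pi.single j a) r = Pi.single j (a * r) := by
  funext k
  simp only [vsmul, Pi.single_apply]
  split
  · rfl
  · exact Nearfield.zero_mul r

namespace IsRSubgroup

variable {S : Set (Fin n → R)}

lemma vsmul_mem (hS : IsRSubgroup S) {x : Fin n → R} (hx : x ∈ S) (r : R) : vsmul x r ∈ S :=
  hS.2.2.2 x hx r

lemma sub_mem (hS : IsRSubgroup S) {x y : Fin n → R} (hx : x ∈ S) (hy : y ∈ S) : x - y ∈ S :=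
  sub_eq_add_neg x y ▸ hS.2.1 x hx _ (hS.2.2.1 y hy)

lemma sum_mem (hS : IsRSubgroup S) {ι : Type*} (s : Finset ι) {f : ι → Fin n → R}
    (h : ∀ i ∈ s, f i ∈ S) : ∑ i ∈ s, f i ∈ S := by
  classical
  induction s using Finset.induction with
  | empty => simpa using hS.1
  | insert a s ha ih =>
      rw [Finset.sum_insert ha]
      exact hS.2.1 _ (h a (by simp)) _ (ih fun i hi => h i (by simp [hi]))

lemma single_mem_of_ne_zero (hS : IsRSubgroup S) {j : Fin n} {a : R}
    (hj : Pi.single j a ∈ S) (ha : a ≠ 0) (r : R) : Pi.single j r ∈ S := by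
  obtain ⟨b, hab, -⟩ := Nearfield.exists_inv a ha
  have h := hS.vsmul_mem hj (b * r)
  rwa [vsmul_single, ← Nearfield.mul_assoc, hab, Nearfield.one_mul] at h

lemma eq_univ_of_single_mem (hS : IsRSubgroup S) (h : ∀ j r, Pi.single j r ∈ S) :
    S = Set.univ :=
  Set.eq_univ_of_forall fun x =>
    Finset.univ_sum_single x ▸ hS.sum_mem _ fun j _ => h j (x j)

end IsRSubgroup

lemma isRSubgroup_nvGen (V : Set (Fin n → R)) : IsRSubgroup (nvGen V) :=
  ⟨fun _ hS _ => hS.1,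
   fun _ hx _ hy S hS hV => hS.2.1 _ (hx S hS hV) _ (hy S hS hV),
   fun _ hx S hS hV => hS.2.2.1 _ (hx S hS hV),
   fun _ hx r S hS hV => hS.2.2.2 _ (hx S hS hV) r⟩

lemma subset_nvGen (V : Set (Fin n → R)) : V ⊆ nvGen V :=
  fun _ hx _ _ hV => hV hx

def graphVec {m : ℕ} (α : Fin m → R) (i : Fin m) : Fin (m + 1) → R :=
  Pi.single i.castSucc 1 + Pi.single (Fin.last m) (α i)

lemma graphVec_sub_single_last {m : ℕ} (α : Fin m → R) (i : Fin m) :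
    graphVec α i - Pi.single (Fin.last m) (α i) = Pi.single i.castSucc 1 :=
  add_sub_cancel_right _ _

lemma vsmul_sum_graphVec_sub_sum_vsmul {m : ℕ} (α : Fin m → R) (lam : R) :
    vsmul (∑ i, graphVec α i) lam - ∑ i, vsmul (graphVec α i) lam =
      Pi.single (Fin.last m) ((∑ i, α i) * lam - ∑ i, α i * lam) := by
  funext k
  induction k using Fin.lastCases with
  | last => simp [vsmul, graphVec, (Fin.castSucc_lt_last _).ne']
  | cast j =>
      simp [vsmul, graphVec, Pi.single_apply, (Fin.castSucc_lt_last j).ne, ite_mul,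
        Nearfield.one_mul, Nearfield.zero_mul]

theorem gen_of_sub_maximal_general
    (hd : ∃ (α : Fin (n - 1) → R) (lam : R),
      (∑ i, α i) * lam ≠ ∑ i, α i * lam) :
    ∃ v : Fin (n - 1) → (Fin n → R), nvGen (Set.range v) = Set.univ := by
  obtain _ | m := n
  · -- `0 - 1 = 0`, so both sums in `hd` are empty
    obtain ⟨α, lam, hd⟩ := hd
    simp [Nearfield.zero_mul] at hd
  obtain ⟨α, lam, hd⟩ : ∃ (α : Fin m → R) (lam : R), (∑ i, α i) * lam ≠ ∑ i, α i * lam := hd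
  refine ⟨graphVec α, ?_⟩
  have hG := isRSubgroup_nvGen (Set.range (graphVec α))
  have hmem i : graphVec α i ∈ nvGen (Set.range (graphVec α)) := subset_nvGen _ ⟨i, rfl⟩
  have hdefect : Pi.single (Fin.last m) ((∑ i, α i) * lam - ∑ i, α i * lam) ∈
      nvGen (Set.range (graphVec α)) := by
    rw [← vsmul_sum_graphVec_sub_sum_vsmul]
    exact hG.sub_mem (hG.vsmul_mem (hG.sum_mem _ fun i _ => hmem i) lam)
      (hG.sum_mem _ fun i _ => hG.vsmul_mem (hmem i) lam)
  have hlast := hG.single_mem_of_ne_zero hdefect (sub_ne_zero.mpr hd)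
  have hcast (i : Fin m) := hG.single_mem_of_ne_zero
    (graphVec_sub_single_last α i ▸ hG.sub_mem (hmem i) (hlast (α i))) Nearfield.one_ne_zero
  exact hG.eq_univ_of_single_mem (Fin.lastCases hlast hcast)

/-- if `(α₁ + ⋯ + α_{n-1})·λ ≠ α₁·λ + ⋯ + α_{n-1}·λ` for some
scalars, then `R^n` is generated (as an `R`-subgroup) by `n - 1` vectors. -/
theorem gen_of_sub_maximal (hn : 2 ≤ n)
    (hd : ∃ (α : Fin (n - 1) → R) (lam : R),
      (∑ i, α i) * lam ≠ ∑ i, α i * lam) :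
    ∃ v : Fin (n - 1) → (Fin n → R), nvGen (Set.range v) = Set.univ :=
  gen_of_sub_maximal_general hd
end

section
/- Let R be a (left) nearfield which is not distributive, i.e. there exist α, β, λ ∈ R with (α+β)·λ ≠ α·λ + β·λ, and let n be a positive integer. For any v ∈ R^n, span({v}) = v·R = { v·r : r ∈ R } if and only if v has at most one nonzero entry. -/
variable {R : Type*} [Nearfield R] {n : ℕ}

/-!
If `v` has at most one nonzero entry, the vectors whose support lies in that of `v` form a
subspace containing `v`, and this subspace is `v·R`. Conversely, let `v i, v j ≠ 0` with `i ≠ j`.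
Rescaling a witness of non-distributivity gives `b, l` with `(b + v i)·l ≠ b·l + v i·l`. The span
of `v` contains `(x + v)·l − x·l` for `x = b·eᵢ`; if that vector were `v·s`, its `j`-entry would force
`s = l`, and its `i`-entry would then say `(b + v i)·l = b·l + v i·l`.
-/

namespace Nearfield

-- Scoped: as global instances they would give `*` and `0` on `R` a second elaboration path.

open Classical in
noncomputable scoped instance : GroupWithZero R where
  mul_assoc := Nearfield.mul_assoc
  one_mul := Nearfield.one_mul
  mul_one := Nearfield.mul_one
  zero_mul := Nearfield.zero_mul
  mul_zero := Nearfield.mul_zero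
  inv a := if h : a = 0 then 0 else Classical.choose (Nearfield.exists_inv a h)
  inv_zero := dif_pos rfl
  mul_inv_cancel a h := by
    rw [dif_neg h]
    exact (Classical.choose_spec (Nearfield.exists_inv a h)).1
  exists_pair_ne := ⟨0, 1, Nearfield.one_ne_zero.symm⟩

scoped instance : LeftDistribClass R :=
  ⟨Nearfield.left_distrib⟩

end Nearfield

section

open scoped Nearfield

theorem exists_add_mul_ne_of_ne_zero (hd : ∃ α β l : R, (α + β) * l ≠ α * l + β * l)
    {a : R} (ha : a ≠ 0) : ∃ b l : R, (b + a) * l ≠ b * l + a * l := by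
  obtain ⟨α, β, l, hne⟩ := hd
  have hβ : β ≠ 0 := by
    rintro rfl
    simp at hne
  set c := a * β⁻¹
  have hc : c ≠ 0 := mul_ne_zero ha (inv_ne_zero hβ)
  have hcβ : c * β = a := inv_mul_cancel_right₀ hβ a
  refine ⟨c * α, l, fun h => hne (mul_left_cancel₀ hc ?_)⟩
  calc c * ((α + β) * l) = (c * α + c * β) * l := by rw [← mul_assoc, mul_add]
    _ = c * α * l + c * β * l := by rw [hcβ, h]
    _ = c * (α * l + β * l) := by rw [mul_add, ← mul_assoc c, ← mul_assoc c]

theorem nvSpan_subset {V N : Set (Fin n → R)} (hN : IsSubspace N) (hV : V ⊆ N) :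
    nvSpan V ⊆ N :=
  fun _ hx => hx N hN hV

theorem vsmul_add_sub_vsmul_mem_nvSpan {V : Set (Fin n → R)} (x : Fin n → R) {y : Fin n → R}
    (hy : y ∈ V) (r : R) : vsmul (x + y) r - vsmul x r ∈ nvSpan V :=
  fun _ hN hV => hN.2.2.2 x y (hV hy) r

theorem vsmul_mem_nvSpan {V : Set (Fin n → R)} {y : Fin n → R} (hy : y ∈ V) (r : R) :
    vsmul y r ∈ nvSpan V := by
  convert vsmul_add_sub_vsmul_mem_nvSpan 0 hy r using 1
  funext k
  simp [vsmul]

theorem isSubspace_setOf_support_subset (s : Set (Fin n)) :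
    IsSubspace {x : Fin n → R | x.support ⊆ s} := by
  simp only [IsSubspace, Set.mem_ofPred_eq, Function.support_subset_iff']
  refine ⟨fun _ _ => rfl, fun x hx y hy k hk => ?_, fun x hx k hk => ?_, fun x y hy r k hk => ?_⟩
  · simp [hx k hk, hy k hk]
  · simp [hx k hk]
  · simp [vsmul, hy k hk]

theorem setOf_support_subset_subset_line {v : Fin n → R} (hv : v.support.Subsingleton) :
    {x : Fin n → R | x.support ⊆ v.support} ⊆ {x | ∃ r, x = vsmul v r} := by
  intro x hx
  rcases hv.eq_empty_or_singleton with hv0 | ⟨i, hvi⟩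
  · refine ⟨0, funext fun k => ?_⟩
    simp [vsmul, Function.support_subset_iff'.1 (hv0 ▸ hx) k (Set.notMem_empty k)]
  · have hi : v i ≠ 0 := Function.mem_support.1 (hvi ▸ Set.mem_singleton i)
    refine ⟨(v i)⁻¹ * x i, funext fun k => ?_⟩
    by_cases hk : k = i
    · subst hk
      simp [vsmul, mul_inv_cancel_left₀ hi]
    · have hvk : v k = 0 := Function.notMem_support.1 (hvi ▸ hk)
      simp [vsmul, hvk, Function.notMem_support.1 fun h => hk (by simpa [hvi] using hx h)]

theorem add_mul_eq_of_mem_line {v : Fin n → R} {i j : Fin n} (hij : i ≠ j) (hj : v j ≠ 0)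
    (b l : R)
    (h : vsmul (Pi.single i b + v) l - vsmul (Pi.single i b) l ∈ {x | ∃ r, x = vsmul v r}) :
    (b + v i) * l = b * l + v i * l := by
  obtain ⟨s, hs⟩ := h
  have hls : l = s := mul_left_cancel₀ hj (by simpa [vsmul, hij.symm] using congrFun hs j)
  have hi := congrFun hs i
  simp only [vsmul, Pi.sub_apply, Pi.add_apply, Pi.single_eq_same, ← hls] at hi
  rw [← hi, add_sub_cancel]

end

theorem span_singleton_eq_line_iff_general
    (hd : ∃ α β lam : R, (α + β) * lam ≠ α * lam + β * lam)
    (v : Fin n → R) :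
    nvSpan {v} = { x : Fin n → R | ∃ r : R, x = vsmul v r } ↔
      ∀ i j : Fin n, v i ≠ 0 → v j ≠ 0 → i = j := by
  refine ⟨fun h i j hi hj => ?_, fun hv => ?_⟩
  · by_contra hij
    obtain ⟨b, l, hbl⟩ := exists_add_mul_ne_of_ne_zero hd hi
    refine hbl (add_mul_eq_of_mem_line hij hj b l ?_)
    rw [← h]
    exact vsmul_add_sub_vsmul_mem_nvSpan _ (Set.mem_singleton v) l
  · refine subset_antisymm ?_ ?_
    · refine (nvSpan_subset (isSubspace_setOf_support_subset _) ?_).trans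
        (setOf_support_subset_subset_line fun i hi j hj => hv i j hi hj)
      simp
    · rintro _ ⟨r, rfl⟩
      exact vsmul_mem_nvSpan (Set.mem_singleton v) r

/-- in a non-distributive nearfield, `span({v}) = v·R` iff `v` has
at most one nonzero entry. -/
theorem span_singleton_eq_line_iff
    (hd : ∃ α β lam : R, (α + β) * lam ≠ α * lam + β * lam)
    (hn : 0 < n) (v : Fin n → R) :
    nvSpan {v} = { x : Fin n → R | ∃ r : R, x = vsmul v r } ↔
      ∀ i j : Fin n, v i ≠ 0 → v j ≠ 0 → i = j :=
  span_singleton_eq_line_iff_general hd v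
end

section
/- Let R be a (left) nearfield which is not distributive, i.e. there exist α, β, λ ∈ R with (α+β)·λ ≠ α·λ + β·λ, and let n be a positive integer. The collection of all subspaces of R^n has exactly 2^n elements. -/
variable {R : Type*} [Nearfield R] {n : ℕ}

/-!
Every subspace `N` of `R^n` is a coordinate subspace, namely the one on the coordinates where
some vector of `N` is nonzero; so subspaces correspond bijectively to subsets of `Fin n`.
Non-distributivity is what makes `N` contain `Pi.single j r` as soon as some `v ∈ N` has
`v j ≠ 0`: rescale `v` so that `v j = β`; then the defect `(x + v)·λ − x·λ − v·λ` with
`x = Pi.single j α` lies in `N`, vanishes off `j` and equals `(α + β)λ − αλ − βλ ≠ 0` at `j`,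
and a vector supported on `{j}` rescales to any `Pi.single j r`.
-/

theorem Nearfield.exists_mul_eq {a : R} (ha : a ≠ 0) (b : R) : ∃ c, a * c = b := by
  obtain ⟨u, hu, -⟩ := Nearfield.exists_inv a ha
  exact ⟨u * b, by rw [← Nearfield.mul_assoc, hu, Nearfield.one_mul]⟩

theorem zero_vsmul (r : R) : vsmul (0 : Fin n → R) r = 0 :=
  funext fun _ => Nearfield.zero_mul r

def coordSubspace (A : Set (Fin n)) : Set (Fin n → R) :=
  {x | ∀ j ∉ A, x j = 0}

def coordSupport (N : Set (Fin n → R)) : Set (Fin n) :=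
  {j | ∃ v ∈ N, v j ≠ 0}

namespace IsSubspace

variable {N : Set (Fin n → R)}

def toAddSubgroup (hN : IsSubspace N) : AddSubgroup (Fin n → R) where
  carrier := N
  zero_mem' := hN.1
  add_mem' hx hy := hN.2.1 _ hx _ hy
  neg_mem' hx := hN.2.2.1 _ hx

theorem vsmul_mem (hN : IsSubspace N) {y : Fin n → R} (hy : y ∈ N) (r : R) :
    vsmul y r ∈ N := by
  simpa [zero_vsmul] using hN.2.2.2 0 y hy r

theorem exists_mem_apply_eq (hN : IsSubspace N) {v : Fin n → R} (hv : v ∈ N) {j : Fin n}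
    (hvj : v j ≠ 0) (b : R) : ∃ v' ∈ N, v' j = b := by
  obtain ⟨c, hc⟩ := Nearfield.exists_mul_eq hvj b
  exact ⟨vsmul v c, hN.vsmul_mem hv c, hc⟩

theorem exists_mem_supported_at (hN : IsSubspace N)
    (hd : ∃ α β lam : R, (α + β) * lam ≠ α * lam + β * lam)
    {v : Fin n → R} (hv : v ∈ N) {j : Fin n} (hvj : v j ≠ 0) :
    ∃ w ∈ N, w j ≠ 0 ∧ ∀ i ≠ j, w i = 0 := by
  obtain ⟨α, β, lam, hlam⟩ := hd
  obtain ⟨v', hv', hv'j⟩ := hN.exists_mem_apply_eq hv hvj β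
  let x : Fin n → R := Pi.single j α
  refine ⟨vsmul (x + v') lam - vsmul x lam - vsmul v' lam,
    hN.toAddSubgroup.sub_mem (hN.2.2.2 x v' hv' lam) (hN.vsmul_mem hv' lam), ?_, ?_⟩
  · simpa [x, vsmul, hv'j, sub_sub, sub_eq_zero] using hlam
  · intro i hij
    simp [x, vsmul, hij, Nearfield.zero_mul]

theorem single_mem (hN : IsSubspace N)
    (hd : ∃ α β lam : R, (α + β) * lam ≠ α * lam + β * lam)
    {v : Fin n → R} (hv : v ∈ N) {j : Fin n} (hvj : v j ≠ 0) (r : R) :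
    Pi.single j r ∈ N := by
  obtain ⟨w, hw, hwj, hw0⟩ := hN.exists_mem_supported_at hd hv hvj
  obtain ⟨c, hc⟩ := Nearfield.exists_mul_eq hwj r
  have hwc : vsmul w c = Pi.single j r := by
    funext i
    by_cases hij : i = j
    · subst hij
      simpa [vsmul] using hc
    · simp [vsmul, hij, hw0 i hij, Nearfield.zero_mul]
  exact hwc ▸ hN.vsmul_mem hw c

theorem eq_coordSubspace_coordSupport (hN : IsSubspace N)
    (hd : ∃ α β lam : R, (α + β) * lam ≠ α * lam + β * lam) :
    N = coordSubspace (coordSupport N) := by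
  refine Set.Subset.antisymm (fun x hx j hj => not_not.mp fun hxj => hj ⟨x, hx, hxj⟩)
    fun x hx => ?_
  rw [← Finset.univ_sum_single x]
  refine hN.toAddSubgroup.sum_mem fun j _ => ?_
  by_cases hj : j ∈ coordSupport N
  · obtain ⟨v, hv, hvj⟩ := hj
    exact hN.single_mem hd hv hvj (x j)
  · rw [hx j hj, Pi.single_zero]
    exact hN.1

end IsSubspace

theorem isSubspace_coordSubspace (A : Set (Fin n)) : IsSubspace (coordSubspace (R := R) A) := by
  refine ⟨fun j _ => rfl, fun x hx y hy j hj => ?_, fun x hx j hj => ?_, fun x y hy r j hj => ?_⟩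
  · simp [hx j hj, hy j hj]
  · simp [hx j hj]
  · simp [vsmul, hy j hj]

theorem single_one_mem_coordSubspace_iff (A : Set (Fin n)) (j : Fin n) :
    Pi.single j (1 : R) ∈ coordSubspace A ↔ j ∈ A :=
  ⟨fun h => by_contra fun hj => Nearfield.one_ne_zero (by simpa using h j hj),
    fun hj i hi => Pi.single_eq_of_ne (by rintro rfl; exact hi hj) 1⟩

theorem coordSubspace_injective : Function.Injective (coordSubspace (R := R) (n := n)) := by
  intro A B hAB
  ext j
  rw [← single_one_mem_coordSubspace_iff (R := R), hAB, single_one_mem_coordSubspace_iff]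

theorem setOf_isSubspace_eq_range_coordSubspace
    (hd : ∃ α β lam : R, (α + β) * lam ≠ α * lam + β * lam) :
    {N : Set (Fin n → R) | IsSubspace N} = Set.range coordSubspace := by
  ext N
  refine ⟨fun hN => ⟨coordSupport N, (hN.eq_coordSubspace_coordSupport hd).symm⟩, ?_⟩
  rintro ⟨A, rfl⟩
  exact isSubspace_coordSubspace A

theorem card_subspaces_general
    (hd : ∃ α β lam : R, (α + β) * lam ≠ α * lam + β * lam) :
    { N : Set (Fin n → R) | IsSubspace N }.ncard = 2 ^ n := by
  rw [setOf_isSubspace_eq_range_coordSubspace hd, ← Set.image_univ,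
    Set.ncard_image_of_injective _ coordSubspace_injective, Set.ncard_univ,
    Nat.card_eq_fintype_card, Fintype.card_set, Fintype.card_fin]

/-- in a non-distributive nearfield, `R^n` has exactly `2^n`
subspaces. -/
theorem card_subspaces
    (hd : ∃ α β lam : R, (α + β) * lam ≠ α * lam + β * lam)
    (hn : 0 < n) :
    { N : Set (Fin n → R) | IsSubspace N }.ncard = 2 ^ n :=
  card_subspaces_general hd
end

section
/- Let R be a (left) nearfield and let M be a unitary right R-module (an abelian group with a right action m·r satisfying m·(r+s) = m·r + m·s, m·(r·s) = (m·r)·s, and m·1 = m). Suppose M is the internal direct sum of n nonzero irreducible submodules M_1, …, M_n, i.e. every element of M can be written uniquely as m_1 + ⋯ + m_n with m_i ∈ M_i, each M_i is a submodule, and each M_i is irreducible. Then there exists a bijection φ : R^n → M such that φ(x + y) = φ(x) + φ(y) and φ(x·r) = φ(x)·r for all x, y ∈ R^n and r ∈ R, where R^n carries componentwise addition and the right scalar multiplication (x·r)_j = x_j·r. -/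
variable {R : Type*} [Nearfield R] {M : Type*} [AddCommGroup M]

/-- An `R`-subgroup of `M` (w.r.t. a right action `act`): an additive subgroup
closed under the action. -/
def IsRSubgroupM (act : M → R → M) (A : Set M) : Prop :=
  (0 : M) ∈ A ∧ (∀ x ∈ A, ∀ y ∈ A, x + y ∈ A) ∧ (∀ x ∈ A, -x ∈ A) ∧
    ∀ x ∈ A, ∀ r : R, act x r ∈ A

/-- A submodule of `M`: an additive subgroup `N` with `(m+x)·r − m·r ∈ N` for all
`m ∈ M`, `x ∈ N`, `r ∈ R`. -/
def IsSubmoduleM (act : M → R → M) (N : Set M) : Prop :=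
  (0 : M) ∈ N ∧ (∀ x ∈ N, ∀ y ∈ N, x + y ∈ N) ∧ (∀ x ∈ N, -x ∈ N) ∧
    ∀ m : M, ∀ x ∈ N, ∀ r : R, act (m + x) r - act m r ∈ N

/-- A submodule `N` is irreducible if `N ≠ {0}` and the only `R`-subgroups of `M`
contained in `N` are `{0}` and `N`. -/
def IsIrreducibleM (act : M → R → M) (N : Set M) : Prop :=
  N ≠ {0} ∧ ∀ A : Set M, IsRSubgroupM act A → A ⊆ N → A = {0} ∨ A = N

/-- Auxiliary: the set of sums of elements of the `Msub i` over a finite index set. -/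
def SubSum {n : ℕ} (Msub : Fin n → Set M) (s : Finset (Fin n)) : Set M :=
  {m | ∃ g : Fin n → M, (∀ i, g i ∈ Msub i) ∧ m = ∑ i ∈ s, g i}

/-- a unitary right `R`-module which is the internal direct sum of
`n` irreducible submodules is isomorphic to `R^n` (componentwise addition and
right scalar multiplication `(x·r)_j = x_j·r`), via an additive, action-preserving
bijection. -/
theorem direct_sum_irreducible_iso (act : M → R → M)
    (hadd : ∀ (m : M) (r s : R), act m (r + s) = act m r + act m s)
    (hmul : ∀ (m : M) (r s : R), act m (r * s) = act (act m r) s)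
    (hone : ∀ m : M, act m 1 = m)
    {n : ℕ} (hn : 0 < n) (Msub : Fin n → Set M)
    (hsubmod : ∀ i, IsSubmoduleM act (Msub i))
    (hirr : ∀ i, IsIrreducibleM act (Msub i))
    (hds : ∀ m : M, ∃! f : Fin n → M, (∀ i, f i ∈ Msub i) ∧ m = ∑ i, f i) :
    ∃ φ : (Fin n → R) → M, Function.Bijective φ ∧
      (∀ x y : Fin n → R, φ (x + y) = φ x + φ y) ∧
      ∀ (x : Fin n → R) (r : R), φ (fun j => x j * r) = act (φ x) r := by
  classical
  -- basic facts about the action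
  have hact0r : ∀ m : M, act m 0 = 0 := by
    intro m
    have h := hadd m 0 0
    rw [add_zero] at h
    have h2 : act m 0 + 0 = act m 0 + act m 0 := by rw [add_zero]; exact h
    exact (add_left_cancel h2).symm
  have hz : ∀ r : R, act (0 : M) r = 0 := by
    intro r
    have h1 := hmul (0 : M) 0 r
    rw [Nearfield.zero_mul, hact0r] at h1
    exact h1.symm
  have hnegr : ∀ (m : M) (r : R), act m (-r) = -act m r := by
    intro m r
    have h := hadd m r (-r)
    rw [add_neg_cancel, hact0r] at h
    exact (neg_eq_of_add_eq_zero_right h.symm).symm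
  have hsubr : ∀ (m : M) (r s : R), act m (r - s) = act m r - act m s := by
    intro m r s
    rw [sub_eq_add_neg, hadd, hnegr, sub_eq_add_neg]
  -- Msub i closed under the action
  have hcl : ∀ i, ∀ x ∈ Msub i, ∀ r : R, act x r ∈ Msub i := by
    intro i x hx r
    have h := (hsubmod i).2.2.2 0 x hx r
    rwa [zero_add, hz, sub_zero] at h
  -- membership facts for SubSum
  have hP0 : ∀ s : Finset (Fin n), (0 : M) ∈ SubSum Msub s :=
    fun s => ⟨0, fun i => (hsubmod i).1, by simp⟩
  have hPadd : ∀ s : Finset (Fin n), ∀ x ∈ SubSum Msub s, ∀ y ∈ SubSum Msub s,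
      x + y ∈ SubSum Msub s := by
    rintro s x ⟨g, hg, rfl⟩ y ⟨g', hg', rfl⟩
    exact ⟨g + g', fun i => (hsubmod i).2.1 _ (hg i) _ (hg' i),
      by rw [← Finset.sum_add_distrib]; rfl⟩
  have hPsub : ∀ s : Finset (Fin n), ∀ x ∈ SubSum Msub s, ∀ y ∈ SubSum Msub s,
      x - y ∈ SubSum Msub s := by
    rintro s x ⟨g, hg, rfl⟩ y ⟨g', hg', rfl⟩
    refine ⟨g - g', fun i => ?_, by rw [← Finset.sum_sub_distrib]; rfl⟩
    have := (hsubmod i).2.1 _ (hg i) _ ((hsubmod i).2.2.1 _ (hg' i))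
    simpa [sub_eq_add_neg] using this
  have hPins : ∀ (a : Fin n) (s : Finset (Fin n)), a ∉ s →
      ∀ x ∈ SubSum Msub s, x ∈ SubSum Msub (insert a s) := by
    rintro a s ha x ⟨g, hg, rfl⟩
    refine ⟨fun i => if i = a then 0 else g i, fun i => ?_, ?_⟩
    · by_cases h : i = a
      · simp [h, (hsubmod a).1]
      · simpa [h] using hg i
    · rw [Finset.sum_insert ha, if_pos rfl, zero_add]
      refine Finset.sum_congr rfl fun i hi => ?_
      have hia : ¬(i = a) := fun h => ha (h ▸ hi)
      rw [if_neg hia]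
  have hMsubP : ∀ (a : Fin n) (s : Finset (Fin n)), a ∉ s →
      ∀ y ∈ Msub a, y ∈ SubSum Msub (insert a s) := by
    intro a s ha y hy
    refine ⟨fun i => if i = a then y else 0, fun i => ?_, ?_⟩
    · by_cases h : i = a
      · subst h; simpa using hy
      · simp [h, (hsubmod i).1]
    · have h1 : ∑ i ∈ s, (if i = a then y else 0) = 0 := by
        refine Finset.sum_eq_zero fun i hi => ?_
        have hia : ¬(i = a) := fun h => ha (h ▸ hi)
        rw [if_neg hia]
      rw [Finset.sum_insert ha, h1, add_zero, if_pos rfl]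
  -- SubSum is a submodule
  have hPsubmod : ∀ s : Finset (Fin n), ∀ (m x : M), x ∈ SubSum Msub s → ∀ r : R,
      act (m + x) r - act m r ∈ SubSum Msub s := by
    intro s
    induction s using Finset.induction_on with
    | empty =>
      rintro m x ⟨g, hg, rfl⟩ r
      simp only [Finset.sum_empty, add_zero, sub_self]
      exact hP0 _
    | @insert a s ha ih =>
      rintro m x ⟨g, hg, rfl⟩ r
      rw [Finset.sum_insert ha]
      have h1 : act ((m + ∑ i ∈ s, g i) + g a) r - act (m + ∑ i ∈ s, g i) r ∈ Msub a :=
        (hsubmod a).2.2.2 _ _ (hg a) r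
      have h2 : act (m + ∑ i ∈ s, g i) r - act m r ∈ SubSum Msub s :=
        ih m _ ⟨g, hg, rfl⟩ r
      have heq : act (m + (g a + ∑ i ∈ s, g i)) r - act m r
          = (act ((m + ∑ i ∈ s, g i) + g a) r - act (m + ∑ i ∈ s, g i) r)
            + (act (m + ∑ i ∈ s, g i) r - act m r) := by
        rw [show m + (g a + ∑ i ∈ s, g i) = (m + ∑ i ∈ s, g i) + g a from by abel]
        abel
      rw [heq]
      exact hPadd _ _ (hMsubP a s ha _ h1) _ (hPins a s ha _ h2)
  -- intersection of Msub a and the sum over s ∌ a is trivial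
  have hinter : ∀ (a : Fin n) (s : Finset (Fin n)), a ∉ s →
      ∀ v ∈ Msub a, v ∈ SubSum Msub s → v = 0 := by
    rintro a s ha v hv ⟨g, hg, hgs⟩
    obtain ⟨f, _, huniq⟩ := hds v
    have h1 : (fun i => if i = a then v else 0) = f := by
      refine huniq _ ⟨fun i => ?_, ?_⟩
      · by_cases h : i = a
        · subst h; simpa using hv
        · simp [h, (hsubmod i).1]
      · simp
    have h2 : (fun i => if i ∈ s then g i else 0) = f := by
      refine huniq _ ⟨fun i => ?_, ?_⟩
      · by_cases h : i ∈ s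
        · simpa [h] using hg i
        · simp [h, (hsubmod i).1]
      · rw [Finset.sum_ite_mem, Finset.univ_inter]
        exact hgs
    have h3 := congrFun (h1.trans h2.symm) a
    simpa [ha] using h3
  -- cross-component additivity of the action
  have hcross : ∀ s : Finset (Fin n), ∀ g : Fin n → M, (∀ i, g i ∈ Msub i) →
      ∀ r : R, act (∑ i ∈ s, g i) r = ∑ i ∈ s, act (g i) r := by
    intro s
    induction s using Finset.induction_on with
    | empty => intro g hg r; simp [hz]
    | @insert a s ha ih =>
      intro g hg r
      rw [Finset.sum_insert ha, Finset.sum_insert ha]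
      set x₁ := g a with hx₁
      set x₂ := ∑ i ∈ s, g i with hx₂
      have hx₂P : x₂ ∈ SubSum Msub s := ⟨g, hg, rfl⟩
      have hA : act (x₂ + x₁) r - act x₂ r ∈ Msub a :=
        (hsubmod a).2.2.2 x₂ x₁ (hg a) r
      have hB : act (x₁ + x₂) r - act x₁ r ∈ SubSum Msub s :=
        hPsubmod s x₁ x₂ hx₂P r
      have hIH : act x₂ r = ∑ i ∈ s, act (g i) r := ih g hg r
      have hx₁r : act x₁ r ∈ Msub a := hcl a _ (hg a) r
      have hx₂r : act x₂ r ∈ SubSum Msub s := by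
        rw [hIH]; exact ⟨fun i => act (g i) r, fun i => hcl i _ (hg i) r, rfl⟩
      have hdMa : (act (x₂ + x₁) r - act x₂ r) - act x₁ r ∈ Msub a := by
        have := (hsubmod a).2.1 _ hA _ ((hsubmod a).2.2.1 _ hx₁r)
        simpa [sub_eq_add_neg] using this
      have hdP : (act (x₂ + x₁) r - act x₂ r) - act x₁ r ∈ SubSum Msub s := by
        have heq : (act (x₂ + x₁) r - act x₂ r) - act x₁ r
            = (act (x₁ + x₂) r - act x₁ r) - act x₂ r := by
          rw [add_comm x₂ x₁]; abel
        rw [heq]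
        exact hPsub _ _ hB _ hx₂r
      have hd0 : (act (x₂ + x₁) r - act x₂ r) - act x₁ r = 0 :=
        hinter a s ha _ hdMa hdP
      have : act (x₂ + x₁) r = act x₁ r + act x₂ r := by
        have := sub_eq_zero.mp hd0
        rw [sub_eq_iff_eq_add] at this
        exact this
      calc act (x₁ + x₂) r = act (x₂ + x₁) r := by rw [add_comm x₁ x₂]
        _ = act x₁ r + act x₂ r := this
        _ = act x₁ r + ∑ i ∈ s, act (g i) r := by rw [hIH]
  -- pick nonzero elements
  have hex : ∀ i, ∃ e, e ∈ Msub i ∧ e ≠ 0 := by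
    intro i
    by_contra h
    push_neg at h
    exact (hirr i).1 (Set.eq_singleton_iff_unique_mem.mpr ⟨(hsubmod i).1, h⟩)
  choose e he hne using hex
  -- orbit of e i is all of Msub i
  have horb : ∀ i, Set.range (fun r : R => act (e i) r) = Msub i := by
    intro i
    have hsub : Set.range (fun r : R => act (e i) r) ⊆ Msub i := by
      rintro _ ⟨r, rfl⟩; exact hcl i _ (he i) r
    have hRsub : IsRSubgroupM act (Set.range fun r : R => act (e i) r) := by
      refine ⟨⟨0, hact0r _⟩, ?_, ?_, ?_⟩
      · rintro _ ⟨r, rfl⟩ _ ⟨s, rfl⟩; exact ⟨r + s, hadd (e i) r s⟩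
      · rintro _ ⟨r, rfl⟩; exact ⟨-r, hnegr (e i) r⟩
      · rintro _ ⟨r, rfl⟩ s; exact ⟨r * s, hmul (e i) r s⟩
    rcases (hirr i).2 _ hRsub hsub with h | h
    · exfalso
      have hmem : e i ∈ Set.range fun r : R => act (e i) r := ⟨1, hone _⟩
      rw [h] at hmem
      exact hne i hmem
    · exact h
  -- orbit maps are injective
  have hinj : ∀ i, Function.Injective (fun r : R => act (e i) r) := by
    intro i r s hrs
    by_contra hne'
    have ht : r - s ≠ 0 := sub_ne_zero_of_ne hne'
    obtain ⟨t, htl, _⟩ := Nearfield.exists_inv _ ht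
    have h0 : act (e i) (r - s) = 0 := by
      rw [hsubr]
      simp only at hrs
      rw [hrs, sub_self]
    have h1 : e i = 0 := by
      have := hmul (e i) (r - s) t
      rw [htl, hone, h0, hz] at this
      exact this
    exact hne i h1
  -- the isomorphism
  refine ⟨fun x => ∑ i, act (e i) (x i), ⟨?_, ?_⟩, ?_, ?_⟩
  · -- injective
    intro x y hxy
    simp only at hxy
    obtain ⟨f, _, huniq⟩ := hds (∑ i, act (e i) (x i))
    have h1 : (fun i => act (e i) (x i)) = f :=
      huniq _ ⟨fun i => hcl i _ (he i) _, rfl⟩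
    have h2 : (fun i => act (e i) (y i)) = f :=
      huniq _ ⟨fun i => hcl i _ (he i) _, hxy⟩
    funext i
    exact hinj i (congrFun (h1.trans h2.symm) i)
  · -- surjective
    intro m
    obtain ⟨f, ⟨hf1, hf2⟩, _⟩ := hds m
    have hxs : ∀ i, ∃ r : R, act (e i) r = f i := by
      intro i
      have : f i ∈ Set.range fun r : R => act (e i) r := by rw [horb i]; exact hf1 i
      exact this
    choose x hx using hxs
    exact ⟨x, by rw [hf2]; exact Finset.sum_congr rfl fun i _ => hx i⟩
  · -- additive
    intro x y
    rw [← Finset.sum_add_distrib]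
    exact Finset.sum_congr rfl fun i _ => by rw [Pi.add_apply, hadd]
  · -- action-preserving
    intro x r
    show (∑ i, act (e i) (x i * r)) = act (∑ i, act (e i) (x i)) r
    have h1 : ∑ i, act (e i) (x i * r) = ∑ i, act (act (e i) (x i)) r :=
      Finset.sum_congr rfl fun i _ => hmul _ _ _
    rw [h1]
    exact (hcross Finset.univ (fun i => act (e i) (x i))
      (fun i => hcl i _ (he i) _) r).symm
end
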